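/- arXiv:1001.0278 — 2 statements merged into one kernel-verified Lean document; each statement's English description precedes it below -/
import Mathlib

section
/- Perfect secrecy of additive secret sharing (bijection form): for every secret K : G and every index i₁ : Fin p, the map sending the randomness r : {i : Fin p // i ≠ j₀} → G to the restriction of the shares to the remaining p−1 indices, i.e. r ↦ (fun i : {i : Fin p // i ≠ i₁} => s(K,r) i), is a bijection from ({i : Fin p // i ≠ j₀} → G) to ({i : Fin p // i ≠ i₁} → G). In particular, any p−1 of the p shares are, for uniformly chosen randomness, distributed identically regardless of the secret K, so complete knowledge of p−1 shares reveals no information about K. -/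
/-- Additive secret sharing: share `i ≠ j₀` is the randomness `r i`, and the
distinguished share at `j₀` is `K` minus the sum of all the random shares. -/
def shares {G : Type*} [AddCommGroup G] {p : ℕ} (j₀ : Fin p) (K : G)
    (r : {i : Fin p // i ≠ j₀} → G) : Fin p → G :=
  fun i => if h : i = j₀ then K - ∑ i : {i : Fin p // i ≠ j₀}, r i else r ⟨i, h⟩

private lemma sum_subtype_ne {G : Type*} [AddCommGroup G] {p : ℕ} (a : Fin p)
    (F : Fin p → G) :
    ∑ i : {i : Fin p // i ≠ a}, F i.val = ∑ i ∈ Finset.univ.erase a, F i := by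
  rw [Finset.sum_subtype (p := fun i => i ≠ a) (Finset.univ.erase a) (by simp) F]

private lemma sum_shares {G : Type*} [AddCommGroup G] {p : ℕ} (a : Fin p) (K : G)
    (r : {i : Fin p // i ≠ a} → G) :
    ∑ i, shares a K r i = K := by
  rw [← Finset.add_sum_erase _ _ (Finset.mem_univ a),
    ← sum_subtype_ne a (shares a K r)]
  have h1 : ∑ i : {i : Fin p // i ≠ a}, shares a K r i.val
      = ∑ i : {i : Fin p // i ≠ a}, r i := by
    refine Finset.sum_congr rfl fun i _ => ?_
    simp [shares, i.2]
  rw [h1]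
  simp [shares]

private lemma shares_restrict {G : Type*} [AddCommGroup G] {p : ℕ} (a : Fin p) (K : G)
    (s : Fin p → G) (hs : ∑ i, s i = K) :
    shares a K (fun i : {i : Fin p // i ≠ a} => s i.val) = s := by
  funext i
  by_cases h : i = a
  · subst h
    have : ∑ j : {j : Fin p // j ≠ i}, s j.val = K - s i := by
      rw [sum_subtype_ne i s, Finset.sum_erase_eq_sub (Finset.mem_univ i), hs]
    simp [shares, this]
  · simp [shares, h]

theorem shares_restrict_bijective {G : Type*} [AddCommGroup G] {p : ℕ} (hp : 1 ≤ p)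
    (j₀ : Fin p) (K : G) (i₁ : Fin p) :
    Function.Bijective
      (fun (r : {i : Fin p // i ≠ j₀} → G) (i : {i : Fin p // i ≠ i₁}) =>
        shares j₀ K r i.val) := by
  refine Function.bijective_iff_has_inverse.mpr
    ⟨fun v (i : {i : Fin p // i ≠ j₀}) => shares i₁ K v i.val, ?_, ?_⟩
  · intro r
    funext i
    have := shares_restrict i₁ K (shares j₀ K r) (sum_shares j₀ K r)
    simp only [this]
    simp [shares, i.2]
  · intro v
    funext i
    have := shares_restrict j₀ K (shares i₁ K v) (sum_shares i₁ K v)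
    simp only [this]
    simp [shares, i.2]
end

section
/- Perfect secrecy of additive secret sharing (distributional form): for every secret K : G and every index i₁ : Fin p, if the randomness r is drawn from the uniform distribution on {i : Fin p // i ≠ j₀} → G, then the induced distribution of the p−1 visible shares (fun i : {i : Fin p // i ≠ i₁} => s(K,r) i) is the uniform distribution on {i : Fin p // i ≠ i₁} → G; in particular this distribution does not depend on K. -/
lemma map_uniform_of_bijective {α β : Type*} [Fintype α] [Nonempty α] [Fintype β] [Nonempty β]
    {f : α → β} (hf : Function.Bijective f) :
    PMF.map f (PMF.uniformOfFintype α) = PMF.uniformOfFintype β := by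
  have hcard : Fintype.card α = Fintype.card β := Fintype.card_of_bijective hf
  ext b
  obtain ⟨a, rfl⟩ := hf.surjective b
  rw [PMF.map_apply]
  rw [tsum_eq_single a (fun a' ha' => if_neg (fun h => ha' (hf.injective h.symm)))]
  simp [PMF.uniformOfFintype_apply, hcard]

theorem shares_restrict_uniform {G : Type*} [AddCommGroup G] [Fintype G] [Nonempty G]
    {p : ℕ} (hp : 1 ≤ p) (j₀ : Fin p) (K : G) (i₁ : Fin p) :
    PMF.map
      (fun (r : {i : Fin p // i ≠ j₀} → G) (i : {i : Fin p // i ≠ i₁}) =>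
        shares j₀ K r i.val)
      (PMF.uniformOfFintype ({i : Fin p // i ≠ j₀} → G))
      = PMF.uniformOfFintype ({i : Fin p // i ≠ i₁} → G) := by
  set f : ({i : Fin p // i ≠ j₀} → G) → ({i : Fin p // i ≠ i₁} → G) :=
    fun r i => shares j₀ K r i.val with hf
  have hval : ∀ (r : {i : Fin p // i ≠ j₀} → G) (i : {i : Fin p // i ≠ j₀}),
      shares j₀ K r i.val = r i := by
    intro r i
    simp [shares, i.prop]
  have hinj : Function.Injective f := by
    intro r₁ r₂ h
    have hne : ∀ i : {i : Fin p // i ≠ j₀}, i.val ≠ i₁ → r₁ i = r₂ i := by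
      intro i hi
      have := congrFun h ⟨i.val, hi⟩
      simpa [f, hval r₁, hval r₂, shares, i.prop] using this
    funext i
    by_cases hi : i.val ≠ i₁
    · exact hne i hi
    · push_neg at hi
      have hj : j₀ ≠ i₁ := fun hji => i.prop (hi.trans hji.symm)
      have hsum : ∑ k : {i : Fin p // i ≠ j₀}, r₁ k = ∑ k : {i : Fin p // i ≠ j₀}, r₂ k := by
        have := congrFun h ⟨j₀, hj⟩
        simp only [f, shares, dif_pos] at this
        exact sub_right_injective this
      have hrest : ∑ k ∈ Finset.univ.erase i, r₁ k = ∑ k ∈ Finset.univ.erase i, r₂ k := by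
        apply Finset.sum_congr rfl
        intro k hk
        apply hne
        intro hk1
        have : k = i := Subtype.ext (hk1.trans hi.symm)
        exact (Finset.mem_erase.mp hk).1 this
      have h1 := Finset.add_sum_erase Finset.univ r₁ (Finset.mem_univ i)
      have h2 := Finset.add_sum_erase Finset.univ r₂ (Finset.mem_univ i)
      have : r₁ i + ∑ k ∈ Finset.univ.erase i, r₁ k
          = r₂ i + ∑ k ∈ Finset.univ.erase i, r₂ k := by
        rw [h1, h2, hsum]
      rwa [hrest, add_left_inj] at this
  have hcard : Fintype.card ({i : Fin p // i ≠ j₀} → G)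
      = Fintype.card ({i : Fin p // i ≠ i₁} → G) := by
    have h1 : Fintype.card {i : Fin p // i ≠ j₀} = Fintype.card {i : Fin p // i ≠ i₁} := by
      simp [Fintype.card_subtype_compl]
    simp [Fintype.card_fun, h1]
  have hbij : Function.Bijective f :=
    (Fintype.bijective_iff_injective_and_card f).2 ⟨hinj, hcard⟩
  exact map_uniform_of_bijective hbij
end
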